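/- Let K be an induced weighted oriented subgraph of a weighted oriented graph D. Then the following are equivalent: (1) there is a strong vertex cover C of D such that V(K) ⊆ C; (2) K has a generating ⋆-semi-forest. -/

import Mathlib

/-! ## Weighted oriented graphs -/

/-- A weighted oriented graph `D = (G, 𝒪, w)`: an orientation of a finite simple
graph together with a weight function, where sources have weight `1`. -/
structure WOGraph (V : Type) where
  /-- the set of directed edges -/
  E : V → V → Prop
  irrefl : ∀ x, ¬ E x x
  asymm : ∀ x y, E x y → ¬ E y x
  /-- the weight function -/
  w : V → ℕ
  w_pos : ∀ x, 1 ≤ w x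
  source_one : ∀ x, (∀ y, ¬ E y x) → w x = 1

namespace WOGraph

variable {V : Type}

/-- The underlying simple graph `G` of `D`. -/
def graph (D : WOGraph V) : SimpleGraph V := SimpleGraph.fromRel D.E

/-- Out-neighbourhood `N⁺_D(x)`. -/
def outN (D : WOGraph V) (x : V) : Set V := {y | D.E x y}

/-- In-neighbourhood `N⁻_D(x)`. -/
def inN (D : WOGraph V) (x : V) : Set V := {y | D.E y x}

/-- Neighbourhood `N_D(x)`. -/
def nbr (D : WOGraph V) (x : V) : Set V := {y | D.E x y ∨ D.E y x}

/-- `N_D(A)` for a set `A` of vertices. -/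
def nbrS (D : WOGraph V) (A : Set V) : Set V := {y | ∃ a ∈ A, y ∈ D.nbr a}

/-- `N⁺_D(A)` for a set `A` of vertices. -/
def outNS (D : WOGraph V) (A : Set V) : Set V := {y | ∃ a ∈ A, D.E a y}

/-- `V⁺`, the set of vertices of weight `> 1`. -/
def Vplus (D : WOGraph V) : Set V := {x | 1 < D.w x}

/-- A vertex cover of `D`. -/
def IsVC (D : WOGraph V) (C : Set V) : Prop := ∀ u v, D.E u v → u ∈ C ∨ v ∈ C

/-- `L₁(C)`. -/
def L1 (D : WOGraph V) (C : Set V) : Set V := {x | x ∈ C ∧ ∃ y, D.E x y ∧ y ∉ C}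

/-- `L₂(C)`. -/
def L2 (D : WOGraph V) (C : Set V) : Set V :=
  {x | x ∈ C ∧ x ∉ D.L1 C ∧ ∃ y, D.E y x ∧ y ∉ C}

/-- `L₃(C)`. -/
def L3 (D : WOGraph V) (C : Set V) : Set V := {x | x ∈ C ∧ x ∉ D.L1 C ∧ x ∉ D.L2 C}

/-- A strong vertex cover of `D`. -/
def IsStrongVC (D : WOGraph V) (C : Set V) : Prop :=
  D.IsVC C ∧ ∀ x ∈ D.L3 C, ∃ y, D.E y x ∧ y ∈ C ∧ y ∉ D.L1 C ∧ 1 < D.w y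

/-- A weighted oriented subgraph of `D`. -/
structure OSub (D : WOGraph V) where
  verts : Set V
  E : V → V → Prop
  sub : ∀ u v, E u v → D.E u v
  memL : ∀ u v, E u v → u ∈ verts
  memR : ∀ u v, E u v → v ∈ verts

namespace OSub

variable {D : WOGraph V}

/-- The underlying simple graph of a weighted oriented subgraph. -/
def graph (H : D.OSub) : SimpleGraph V := SimpleGraph.fromRel H.E

/-- Neighbourhood inside the subgraph. -/
def nbr (H : D.OSub) (x : V) : Set V := {y | H.E x y ∨ H.E y x}

/-- Degree inside the subgraph. -/
noncomputable def deg (H : D.OSub) (x : V) : ℕ := (H.nbr x).ncard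

/-- `H` is contained in `K`. -/
def le (H K : D.OSub) : Prop := H.verts ⊆ K.verts ∧ ∀ u v, H.E u v → K.E u v

end OSub

/-- The induced weighted oriented subgraph on a set `A` of vertices. -/
def induced (D : WOGraph V) (A : Set V) : D.OSub where
  verts := A
  E u v := D.E u v ∧ u ∈ A ∧ v ∈ A
  sub _ _ h := h.1
  memL _ _ h := h.2.1
  memR _ _ h := h.2.2

/-- `K` is an induced weighted oriented subgraph of `D`. -/
def IsInducedSub {D : WOGraph V} (K : D.OSub) : Prop :=
  ∀ u v, D.E u v → u ∈ K.verts → v ∈ K.verts → K.E u v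

/-- A root oriented tree (ROT) with parent `v`. -/
def IsROT (D : WOGraph V) (T : D.OSub) (v : V) : Prop :=
  v ∈ T.verts ∧ T.graph.IsAcyclic ∧
  (∀ x ∈ T.verts, Relation.ReflTransGen T.E v x) ∧
  (∀ x ∈ T.verts, D.w x = 1 → (T.deg x = 1 ∧ x ≠ v) ∨ (T.verts = {v} ∧ x = v))

/-- A unicycle oriented subgraph whose (unique) cycle has vertex set `Cs`. -/
def IsUnicycle (D : WOGraph V) (B : D.OSub) (Cs : Set V) : Prop :=
  (∃ (n : ℕ) (f : ZMod n → V), 3 ≤ n ∧ Function.Injective f ∧ Set.range f = Cs ∧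
      ∀ i, B.E (f i) (f (i + 1))) ∧
  (∀ (a : V) (p : B.graph.Walk a a), p.IsCycle → {x | x ∈ p.support} = Cs) ∧
  (∀ y ∈ B.verts, y ∉ Cs → ∃ x ∈ Cs, Relation.ReflTransGen B.E x y) ∧
  (∀ x ∈ B.verts, D.w x = 1 → B.deg x = 1)

/-- A `⋆`-semi-forest structure on a weighted oriented subgraph `H` of `D`. -/
structure SSF (D : WOGraph V) (H : D.OSub) where
  r : ℕ
  s : ℕ
  T : Fin r → D.OSub
  parent : Fin r → V
  B : Fin s → D.OSub
  Cs : Fin s → Set V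
  hT : ∀ i, D.IsROT (T i) (parent i)
  hB : ∀ j, D.IsUnicycle (B j) (Cs j)
  hverts : H.verts = (⋃ i, (T i).verts) ∪ (⋃ j, (B j).verts)
  hE : ∀ u v, H.E u v ↔ ((∃ i, (T i).E u v) ∨ (∃ j, (B j).E u v))
  hTT : ∀ i i', i ≠ i' → Disjoint (T i).verts (T i').verts
  hBB : ∀ j j', j ≠ j' → Disjoint (B j).verts (B j').verts
  hTB : ∀ i j, Disjoint (T i).verts (B j).verts
  wv : Fin r → V
  hwv_not : ∀ i, wv i ∉ H.verts
  hwv_nbr : ∀ i, wv i ∈ D.nbr (parent i)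
  W1 : Set V
  W2 : Set V
  hW_union : W1 ∪ W2 = Set.range wv
  hW_disj : Disjoint W1 W2
  hW1_stable : ∀ x ∈ W1, ∀ y ∈ W1, ¬ D.graph.Adj x y
  hW2_plus : W2 ⊆ D.Vplus
  hW2_edge : ∀ i, wv i ∈ W2 → D.E (wv i) (parent i)
  hW1_out : D.outNS (W2 ∪ ({x | x ∈ H.verts ∧ 2 ≤ H.deg x} ∪
      {x | (∃ i, parent i = x) ∧ H.deg x = 1})) ∩ W1 = ∅

/-- The set `H̃` associated with a `⋆`-semi-forest. -/
noncomputable def SSF.tilde {D : WOGraph V} {H : D.OSub} (F : D.SSF H) : Set V :=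
  {x | x ∈ H.verts ∧ 2 ≤ H.deg x} ∪ {x | (∃ i, F.parent i = x) ∧ H.deg x = 1}

/-- `K` has a generating `⋆`-semi-forest. -/
def HasGenSSF (D : WOGraph V) (K : D.OSub) : Prop :=
  ∃ H : D.OSub, Nonempty (D.SSF H) ∧ H.verts = K.verts

/-- The `⋆`-condition for a 5-tuple `(a', a, b, b', c)` written along an induced 5-cycle. -/
def StarCond (D : WOGraph V) (a' a b b' c : V) : Prop :=
  (D.E a' a ∧ D.w a' = 1) ∧
  (D.inN a ⊆ D.nbr c ∧ D.inN a ∩ D.Vplus ⊆ D.inN c) ∧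
  (D.nbr b' ⊆ D.nbr a' ∪ D.outN a ∧ D.inN b' ∩ D.Vplus ⊆ D.inN a')

/-- The `⋆`-property for an induced 5-cycle `z 0, z 1, z 2, z 3, z 4`. -/
def HasStarProp (D : WOGraph V) (z : Fin 5 → V) : Prop :=
  ∀ i : Fin 5,
    (D.E (z i) (z (i + 1)) ∧ 1 < D.w (z i) →
      StarCond D (z (i - 1)) (z i) (z (i + 1)) (z (i + 2)) (z (i + 3))) ∧
    (D.E (z (i + 1)) (z i) ∧ 1 < D.w (z (i + 1)) →
      StarCond D (z (i + 2)) (z (i + 1)) (z i) (z (i - 1)) (z (i - 2)))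

/-- The edge ideal `I(D)` of a weighted oriented graph in `k[x_v : v ∈ V]`. -/
noncomputable def edgeIdeal (k : Type) [Field k] (D : WOGraph V) : Ideal (MvPolynomial V k) :=
  Ideal.span {f | ∃ u v, D.E u v ∧ f = MvPolynomial.X u * MvPolynomial.X v ^ D.w v}

end WOGraph

/-! ## Generic graph notions -/

/-- A vertex cover of a simple graph. -/
def gVC {W : Type} (G : SimpleGraph W) (C : Set W) : Prop :=
  ∀ u v, G.Adj u v → u ∈ C ∨ v ∈ C

/-- The vertex cover number `τ(G)`. -/
noncomputable def tau {W : Type} (G : SimpleGraph W) : ℕ :=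
  sInf {n | ∃ C : Set W, gVC G C ∧ C.ncard = n}

/-- A stable (independent) set. -/
def Stable {W : Type} (G : SimpleGraph W) (S : Set W) : Prop :=
  ∀ x ∈ S, ∀ y ∈ S, ¬ G.Adj x y

/-- `G` is well-covered: all maximal stable sets have the same cardinality. -/
def WellCovered {W : Type} (G : SimpleGraph W) : Prop :=
  ∀ S T : Set W, Maximal (Stable G) S → Maximal (Stable G) T → S.ncard = T.ncard

/-- `e` is (the vertex set of) an edge of `G`. -/
def IsEdgeSet {W : Type} (G : SimpleGraph W) (e : Set W) : Prop :=
  ∃ u v, G.Adj u v ∧ e = {u, v}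

/-- An edge `e = {b, b'}` has the property (P). -/
def PropP {W : Type} (G : SimpleGraph W) (e : Set W) : Prop :=
  ∀ a b a' b', e = {b, b'} → G.Adj a b → G.Adj a' b' → a ∉ e → a' ∉ e → G.Adj a a'

/-- A matching of `G`, as a set of (vertex sets of) edges. -/
def IsMatchingSet {W : Type} (G : SimpleGraph W) (M : Set (Set W)) : Prop :=
  (∀ e ∈ M, IsEdgeSet G e) ∧ M.Pairwise Disjoint

/-- A perfect matching of `G`. -/
def IsPerfectMatchingSet {W : Type} (G : SimpleGraph W) (M : Set (Set W)) : Prop :=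
  IsMatchingSet G M ∧ ⋃₀ M = Set.univ

/-- The matching number `ν(G)`. -/
noncomputable def nu {W : Type} (G : SimpleGraph W) : ℕ :=
  sSup {n | ∃ M, IsMatchingSet G M ∧ M.ncard = n}

/-- The degree of a vertex. -/
noncomputable def gdeg {W : Type} (G : SimpleGraph W) (x : W) : ℕ := (G.neighborSet x).ncard

/-- `v` is a simplicial vertex: its closed neighbourhood is a clique. -/
def IsSimplicialVtx {W : Type} (G : SimpleGraph W) (v : W) : Prop :=
  G.IsClique (insert v (G.neighborSet v))

/-- The set `S_G` of (vertex sets of) simplexes of `G`. -/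
def SimplexSets {W : Type} (G : SimpleGraph W) : Set (Set W) :=
  {S | ∃ v, IsSimplicialVtx G v ∧ S = insert v (G.neighborSet v)}

/-- `G` is a simplicial graph. -/
def SimplicialGraph {W : Type} (G : SimpleGraph W) : Prop :=
  ∀ v, IsSimplicialVtx G v ∨ ∃ u, G.Adj v u ∧ IsSimplicialVtx G u

/-- The cycle graph on `ZMod n`. -/
def cycGraph (n : ℕ) : SimpleGraph (ZMod n) := SimpleGraph.fromRel (fun i j => j = i + 1)

/-- `G` is chordal: it has no induced cycles of length `≥ 4`. -/
def Chordal {W : Type} (G : SimpleGraph W) : Prop :=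
  ∀ n : ℕ, 4 ≤ n → ∀ A : Set W, IsEmpty (G.induce A ≃g cycGraph n)

/-- `G` has a cycle of length `k`. -/
def HasCycleLen {W : Type} (G : SimpleGraph W) (k : ℕ) : Prop :=
  ∃ (a : W) (p : G.Walk a a), p.IsCycle ∧ p.length = k

/-- `z 0, z 1, z 2, z 3, z 4` is an induced 5-cycle of `G`. -/
def IsInduced5Cycle {W : Type} (G : SimpleGraph W) (z : Fin 5 → W) : Prop :=
  Function.Injective z ∧ ∀ i j : Fin 5, G.Adj (z i) (z j) ↔ (j = i + 1 ∨ i = j + 1)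

/-- A basic 5-cycle: an induced 5-cycle without two adjacent vertices of degree `≥ 3`. -/
def IsBasic5Cycle {W : Type} (G : SimpleGraph W) (z : Fin 5 → W) : Prop :=
  IsInduced5Cycle G z ∧ ∀ i : Fin 5, ¬ (3 ≤ gdeg G (z i) ∧ 3 ≤ gdeg G (z (i + 1)))

/-- The set `C_G` of (vertex sets of) basic 5-cycles of `G`. -/
def Basic5Sets {W : Type} (G : SimpleGraph W) : Set (Set W) :=
  {A | ∃ z : Fin 5 → W, IsBasic5Cycle G z ∧ A = Set.range z}

/-- The clique number `ω(G)`. -/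
noncomputable def cliqueNum' {W : Type} (G : SimpleGraph W) : ℕ :=
  sSup {n | ∃ s : Set W, G.IsClique s ∧ s.ncard = n}

/-- `G` is a perfect graph. -/
def IsPerfectGraph {W : Type} (G : SimpleGraph W) : Prop :=
  ∀ A : Set W, (G.induce A).chromaticNumber = (cliqueNum' (G.induce A) : ℕ∞)

/-- A `τ`-reduction of `G` into the induced subgraphs on the `A i`. -/
noncomputable def TauReduction {W : Type} (G : SimpleGraph W) (s : ℕ) (A : Fin s → Set W) : Prop :=
  (∀ i j, i ≠ j → Disjoint (A i) (A j)) ∧ (⋃ i, A i) = Set.univ ∧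
  tau G = ∑ i, tau (G.induce (A i))

/-- `G` is an SCQ graph witnessed by the matching `Q`. -/
def IsSCQ {V : Type} (D : WOGraph V) (Q : Set (Set V)) : Prop :=
  (Q = ∅ ∨ (IsMatchingSet D.graph Q ∧ ∀ e ∈ Q, PropP D.graph e)) ∧
  (∀ A ∈ SimplexSets D.graph ∪ Basic5Sets D.graph ∪ Q,
    ∀ B ∈ SimplexSets D.graph ∪ Basic5Sets D.graph ∪ Q, A = B ∨ Disjoint A B) ∧
  ⋃₀ (SimplexSets D.graph ∪ Basic5Sets D.graph ∪ Q) = Set.univ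

/-- An ideal is unmixed if all its associated primes have the same height. -/
def IsUnmixed {R : Type} [CommRing R] (I : Ideal R) : Prop :=
  ∀ p q : Ideal R, p ∈ associatedPrimes R (R ⧸ I) → q ∈ associatedPrimes R (R ⧸ I) →
    ∀ (hp : p.IsPrime) (hq : q.IsPrime),
      Order.height (⟨p, hp⟩ : PrimeSpectrum R) = Order.height (⟨q, hq⟩ : PrimeSpectrum R)
/-! ## Concrete graphs -/

/-- The 7-cycle `C₇`. -/
def C7graph : SimpleGraph (ZMod 7) := cycGraph 7

/-- Vertices of `T₁₀`. -/
inductive T10V | v | a1 | a2 | a3 | b1 | b2 | b3 | c1 | c2 | c3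
deriving DecidableEq

instance instFintypeT10V : Fintype T10V :=
  ⟨{T10V.v, T10V.a1, T10V.a2, T10V.a3, T10V.b1, T10V.b2, T10V.b3, T10V.c1, T10V.c2, T10V.c3}, fun x => by cases x <;> decide⟩

open T10V in
/-- The graph `T₁₀`. -/
def T10graph : SimpleGraph T10V := SimpleGraph.fromRel (fun x y =>
  (x, y) ∈ ([(v,a1), (v,a2), (v,a3), (a1,b1), (a2,b2), (a3,b3), (b1,c1), (b2,c2),
    (b3,c3), (c1,c2), (c2,c3), (c3,c1)] : List (T10V × T10V)))

/-- Vertices of `Q₁₃`. -/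
inductive Q13V | a1 | a2 | b1 | b2 | c1 | c2 | d1 | d2 | g1 | g2 | h | h' | v
deriving DecidableEq

instance instFintypeQ13V : Fintype Q13V :=
  ⟨{Q13V.a1, Q13V.a2, Q13V.b1, Q13V.b2, Q13V.c1, Q13V.c2, Q13V.d1, Q13V.d2, Q13V.g1, Q13V.g2, Q13V.h, Q13V.h', Q13V.v}, fun x => by cases x <;> decide⟩

open Q13V in
/-- The graph `Q₁₃`. -/
def Q13graph : SimpleGraph Q13V := SimpleGraph.fromRel (fun x y =>
  (x, y) ∈ ([(a1,a2), (a1,d1), (a2,d2), (d1,c1), (d1,g1), (d1,h), (d2,c2), (d2,g2),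
    (d2,h), (g1,b1), (g1,h'), (g2,b2), (g2,h'), (b1,c2), (b2,c1), (h,v),
    (h',v)] : List (Q13V × Q13V)))

/-- Vertices of `P₁₃`. -/
inductive P13V | a1 | a2 | a3 | a4 | b1 | b2 | b3 | b4 | c1 | c2 | d1 | d2 | v
deriving DecidableEq

instance instFintypeP13V : Fintype P13V :=
  ⟨{P13V.a1, P13V.a2, P13V.a3, P13V.a4, P13V.b1, P13V.b2, P13V.b3, P13V.b4, P13V.c1, P13V.c2, P13V.d1, P13V.d2, P13V.v}, fun x => by cases x <;> decide⟩

open P13V in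
/-- The graph `P₁₃`. -/
def P13graph : SimpleGraph P13V := SimpleGraph.fromRel (fun x y =>
  (x, y) ∈ ([(a1,a2), (a1,b1), (a2,b2), (a3,a4), (a3,b3), (a4,b4), (b1,c1), (b2,c1),
    (b3,c2), (b4,c2), (c1,c2), (d1,b1), (d1,b3), (d2,b2), (d2,b4), (v,d1),
    (v,d2)] : List (P13V × P13V)))

/-- Vertices of `P₁₄`. -/
inductive P14V | a1 | a2 | a3 | a4 | a5 | a6 | a7 | b1 | b2 | b3 | b4 | b5 | b6 | b7
deriving DecidableEq

instance instFintypeP14V : Fintype P14V :=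
  ⟨{P14V.a1, P14V.a2, P14V.a3, P14V.a4, P14V.a5, P14V.a6, P14V.a7, P14V.b1, P14V.b2, P14V.b3, P14V.b4, P14V.b5, P14V.b6, P14V.b7}, fun x => by cases x <;> decide⟩

open P14V in
/-- The graph `P₁₄`. -/
def P14graph : SimpleGraph P14V := SimpleGraph.fromRel (fun x y =>
  (x, y) ∈ ([(a1,a2), (a2,a3), (a3,a4), (a4,a5), (a5,a6), (a6,a7), (a7,a1),
    (a1,b1), (a2,b2), (a3,b3), (a4,b4), (a5,b5), (a6,b6), (a7,b7),
    (b1,b3), (b2,b4), (b3,b5), (b4,b6), (b5,b7), (b6,b1), (b7,b2)] : List (P14V × P14V)))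

/-- Vertices of `P₁₀`. -/
inductive P10V | a1 | a2 | b1 | b2 | c1 | c2 | d1 | d2 | g1 | g2
deriving DecidableEq

instance instFintypeP10V : Fintype P10V :=
  ⟨{P10V.a1, P10V.a2, P10V.b1, P10V.b2, P10V.c1, P10V.c2, P10V.d1, P10V.d2, P10V.g1, P10V.g2}, fun x => by cases x <;> decide⟩

open P10V in
/-- The graph `P₁₀`. -/
def P10graph : SimpleGraph P10V := SimpleGraph.fromRel (fun x y =>
  (x, y) ∈ ([(a1,b1), (b1,d2), (d2,d1), (d1,b2), (b2,a2), (a1,g1), (g1,d1), (g1,c1),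
    (c1,c2), (c2,g2), (g2,a2), (d2,g2)] : List (P10V × P10V)))

/-!
A strong vertex cover `C ⊇ V(K)` gives every vertex `x ∈ K ∩ L₃(C)` a heavy in-neighbour in
`C ∖ L₁(C)`. Keeping those that lie in `K` as parents yields a map `par` on `K` read as a backwards
functional digraph: iterating `par`, every vertex of `K` falls either onto a root (a fixed point)
or into a periodic orbit, which by asymmetry is an oriented cycle of length at least `3`. The
basins of the roots are ROTs and those of the orbits are unicycle subgraphs; the weight conditions
hold because parents are heavy. A root has a neighbour outside `C` (put in `W₁`, stable since `C`
is a cover) or its heavy witness lies outside `K` (put in `W₂`). That a component has no cycle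
other than its orbit is a rank argument: on a cycle, a vertex farthest from the orbit would need
two distinct neighbours closer to it, but only its parent is.

Conversely, given a `⋆`-semi-forest `H`, let `S` be a maximal stable set containing `W₁` and
avoiding `V(H) ∪ N⁺(W₂ ∪ H̃)`, and `C = Sᶜ`. A vertex of `L₃(C)` has no neighbour in `S`; if it lies
in `H` or in `N⁺(W₂ ∪ H̃)` it has an in-neighbour in `W₂ ∪ H̃`, which is heavy and in
`C ∖ L₁(C)`; otherwise maximality of `S` gives it a neighbour in `S`, which is impossible.
-/
namespace Function

variable {α : Type*} (f : α → α)

def forwardOrbit (x : α) : Set α := Set.range (f^[·] x)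

def basin (Z : Set α) : Set α := {x | ∃ n, f^[n] x ∈ Z}

variable {f}

theorem mem_forwardOrbit_self (x : α) : x ∈ forwardOrbit f x := ⟨0, rfl⟩

theorem mapsTo_forwardOrbit (x : α) : Set.MapsTo f (forwardOrbit f x) (forwardOrbit f x) := by
  rintro _ ⟨n, rfl⟩
  exact ⟨n + 1, iterate_succ_apply' f n x⟩

theorem IsFixedPt.forwardOrbit_eq {v : α} (hv : IsFixedPt f v) : forwardOrbit f v = {v} := by
  refine Set.eq_singleton_iff_unique_mem.mpr ⟨mem_forwardOrbit_self v, ?_⟩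
  rintro _ ⟨n, rfl⟩
  exact (hv.iterate n).eq

theorem forwardOrbit_subset_periodicPts {x : α} (hx : x ∈ periodicPts f) :
    forwardOrbit f x ⊆ periodicPts f := by
  rintro _ ⟨n, rfl⟩
  obtain ⟨k, hk, hper⟩ := mem_periodicPts.mp hx
  exact mk_mem_periodicPts hk (hper.apply_iterate n)

theorem mem_forwardOrbit_of_mem_forwardOrbit {x y : α} (hx : x ∈ periodicPts f)
    (hy : y ∈ forwardOrbit f x) : x ∈ forwardOrbit f y := by
  obtain ⟨n, rfl⟩ := hy
  obtain ⟨k, hk, hper⟩ := mem_periodicPts.mp hx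
  refine ⟨k * n - n, ?_⟩
  dsimp only
  rw [← iterate_add_apply, Nat.sub_add_cancel (Nat.le_mul_of_pos_left n hk)]
  exact (hper.mul_const n).eq

theorem forwardOrbit_subset {x y : α} (hy : y ∈ forwardOrbit f x) :
    forwardOrbit f y ⊆ forwardOrbit f x := by
  obtain ⟨n, rfl⟩ := hy
  rintro _ ⟨m, rfl⟩
  exact ⟨m + n, (iterate_add_apply f m n x)⟩

theorem forwardOrbit_eq_of_mem {x y : α} (hx : x ∈ periodicPts f) (hy : y ∈ forwardOrbit f x) :
    forwardOrbit f y = forwardOrbit f x :=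
  (forwardOrbit_subset hy).antisymm
    (forwardOrbit_subset (mem_forwardOrbit_of_mem_forwardOrbit hx hy))

theorem self_mem_basin {Z : Set α} {x : α} (hx : x ∈ Z) : x ∈ basin f Z := ⟨0, hx⟩

theorem mapsTo_basin {Z : Set α} (hZ : Set.MapsTo f Z Z) :
    Set.MapsTo f (basin f Z) (basin f Z) := by
  rintro x ⟨n, hn⟩
  exact ⟨n, by rw [← iterate_succ_apply, iterate_succ_apply']; exact hZ hn⟩

theorem iterate_mem_of_mem_basin {Z : Set α} (hZ : Set.MapsTo f Z Z) {x : α} (hx : x ∈ basin f Z) :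
    ∃ N, ∀ n, N ≤ n → f^[n] x ∈ Z := by
  obtain ⟨N, hN⟩ := hx
  refine ⟨N, fun n hn => ?_⟩
  obtain ⟨k, rfl⟩ := Nat.exists_eq_add_of_le hn
  rw [add_comm, iterate_add_apply]
  exact (hZ.iterate k) hN

theorem IsFixedPt.mem_of_mem_basin {Z : Set α} {x : α} (hx : IsFixedPt f x) (h : x ∈ basin f Z) :
    x ∈ Z := by
  obtain ⟨n, hn⟩ := h
  rwa [hx.iterate] at hn

theorem forwardOrbit_eq_of_mem_basin_inter {x x' y : α} (hx : x ∈ periodicPts f)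
    (hx' : x' ∈ periodicPts f) (hy : y ∈ basin f (forwardOrbit f x))
    (hy' : y ∈ basin f (forwardOrbit f x')) : forwardOrbit f x = forwardOrbit f x' := by
  obtain ⟨N, hN⟩ := iterate_mem_of_mem_basin (mapsTo_forwardOrbit x) hy
  obtain ⟨N', hN'⟩ := iterate_mem_of_mem_basin (mapsTo_forwardOrbit x') hy'
  rw [← forwardOrbit_eq_of_mem hx (hN _ (le_max_left N N')),
    forwardOrbit_eq_of_mem hx' (hN' _ (le_max_right N N'))]

theorem disjoint_basin_forwardOrbit {x x' : α} (hx : x ∈ periodicPts f) (hx' : x' ∈ periodicPts f)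
    (hne : forwardOrbit f x ≠ forwardOrbit f x') :
    Disjoint (basin f (forwardOrbit f x)) (basin f (forwardOrbit f x')) :=
  Set.disjoint_left.mpr fun _ hy hy' => hne (forwardOrbit_eq_of_mem_basin_inter hx hx' hy hy')

theorem exists_iterate_mem_periodicPts [Finite α] (f : α → α) (x : α) :
    ∃ n, f^[n] x ∈ periodicPts f := by
  obtain ⟨a, b, hab, heq⟩ := Finite.exists_ne_map_eq_of_infinite (f^[·] x)
  wlog hlt : a < b generalizing a b
  · exact this b a hab.symm heq.symm (hab.lt_or_gt.resolve_left hlt)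
  refine ⟨a, mk_mem_periodicPts (Nat.sub_pos_of_lt hlt) ?_⟩
  change f^[b - a] (f^[a] x) = f^[a] x
  rw [← iterate_add_apply, Nat.sub_add_cancel hlt.le]
  exact heq.symm

theorem exists_mem_basin_forwardOrbit [Finite α] (f : α → α) (x : α) :
    ∃ q ∈ periodicPts f, x ∈ basin f (forwardOrbit f q) :=
  let ⟨n, hn⟩ := exists_iterate_mem_periodicPts f x
  ⟨_, hn, n, mem_forwardOrbit_self _⟩

variable {x y : α}

theorem not_isFixedPt_of_mem_forwardOrbit (hx : x ∈ periodicPts f) (hfx : ¬IsFixedPt f x)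
    (hy : y ∈ forwardOrbit f x) : ¬IsFixedPt f y := fun hfy => by
  have h := mem_forwardOrbit_of_mem_forwardOrbit hx hy
  rw [hfy.forwardOrbit_eq, Set.mem_singleton_iff] at h
  exact hfx (h ▸ hfy)

theorem iterate_eq_iterate_of_cast_eq {a b : ℕ} (h : (a : ZMod (minimalPeriod f x)) = b) :
    f^[a] x = f^[b] x := by
  rw [← iterate_mod_minimalPeriod_eq, ← iterate_mod_minimalPeriod_eq (n := b),
    (ZMod.natCast_eq_natCast_iff' _ _ _).mp h]

section ZModParam

variable (hx : x ∈ periodicPts f)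
include hx

/-- The orbit is enumerated backwards, so that each point is the image of its successor. -/
theorem apply_iterate_neg_val_add_one (i : ZMod (minimalPeriod f x)) :
    f (f^[(-(i + 1)).val] x) = f^[(-i).val] x := by
  have : NeZero (minimalPeriod f x) := ⟨(minimalPeriod_pos_of_mem_periodicPts hx).ne'⟩
  rw [← iterate_succ_apply' f]
  exact iterate_eq_iterate_of_cast_eq (by push_cast [ZMod.natCast_zmod_val]; ring)

theorem injective_iterate_neg_val :
    Injective fun i : ZMod (minimalPeriod f x) => f^[(-i).val] x := by
  have : NeZero (minimalPeriod f x) := ⟨(minimalPeriod_pos_of_mem_periodicPts hx).ne'⟩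
  intro i j hij
  have := iterate_injOn_Iio_minimalPeriod (ZMod.val_lt (-i)) (ZMod.val_lt (-j)) hij
  exact neg_injective (ZMod.val_injective _ this)

theorem range_iterate_neg_val :
    Set.range (fun i : ZMod (minimalPeriod f x) => f^[(-i).val] x) = forwardOrbit f x := by
  have : NeZero (minimalPeriod f x) := ⟨(minimalPeriod_pos_of_mem_periodicPts hx).ne'⟩
  refine Set.Subset.antisymm (Set.range_subset_iff.mpr fun i => ⟨(-i).val, rfl⟩) ?_
  rintro _ ⟨n, rfl⟩
  exact ⟨-(n : ZMod _), iterate_eq_iterate_of_cast_eq (by simp)⟩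

end ZModParam

theorem basin_subset {K Z : Set α} (hK : ∀ x ∉ K, IsFixedPt f x) (hZ : Z ⊆ K) :
    basin f Z ⊆ K := fun x hx => by_contra fun hxK => hxK (hZ ((hK x hxK).mem_of_mem_basin hx))

theorem forwardOrbit_subset_of_not_isFixedPt {K : Set α} (hK : ∀ x ∉ K, IsFixedPt f x) {q : α}
    (hq : q ∈ periodicPts f) (hq' : ¬IsFixedPt f q) : forwardOrbit f q ⊆ K := fun _ hy =>
  by_contra fun hyK => not_isFixedPt_of_mem_forwardOrbit hq hq' hy (hK _ hyK)

theorem disjoint_basin_singleton {v v' : α} (hv : IsFixedPt f v) (hv' : IsFixedPt f v')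
    (hne : v ≠ v') : Disjoint (basin f {v}) (basin f {v'}) := by
  rw [← hv.forwardOrbit_eq, ← hv'.forwardOrbit_eq]
  refine disjoint_basin_forwardOrbit (mk_mem_periodicPts one_pos (hv.isPeriodicPt 1))
    (mk_mem_periodicPts one_pos (hv'.isPeriodicPt 1)) ?_
  simpa only [hv.forwardOrbit_eq, hv'.forwardOrbit_eq, ne_eq, Set.singleton_eq_singleton_iff]

theorem disjoint_basin_singleton_forwardOrbit {v q : α} (hv : IsFixedPt f v)
    (hq : q ∈ periodicPts f) (hq' : ¬IsFixedPt f q) :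
    Disjoint (basin f {v}) (basin f (forwardOrbit f q)) := by
  rw [← hv.forwardOrbit_eq]
  refine disjoint_basin_forwardOrbit (mk_mem_periodicPts one_pos (hv.isPeriodicPt 1)) hq
    fun h => hq' ?_
  have hqv := mem_forwardOrbit_self (f := f) q
  rw [← h, hv.forwardOrbit_eq, Set.mem_singleton_iff] at hqv
  exact hqv ▸ hv

theorem exists_basin_decomposition [Finite α] {K : Set α} (hK : Set.MapsTo f K K)
    (hfix : ∀ x ∉ K, IsFixedPt f x) :
    ∃ (r s : ℕ) (v : Fin r → α) (q : Fin s → α),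
      (∀ i, v i ∈ K ∧ IsFixedPt f (v i)) ∧ (∀ j, q j ∈ periodicPts f ∧ ¬IsFixedPt f (q j)) ∧
      K = (⋃ i, basin f {v i}) ∪ (⋃ j, basin f (forwardOrbit f (q j))) ∧
      Pairwise (Disjoint on fun i => basin f {v i}) ∧
      Pairwise (Disjoint on fun j => basin f (forwardOrbit f (q j))) ∧
      ∀ i j, Disjoint (basin f {v i}) (basin f (forwardOrbit f (q j))) := by
  let R : Set α := {v | v ∈ K ∧ IsFixedPt f v}
  let O : Set (Set α) := {Z | ∃ q ∈ periodicPts f, ¬IsFixedPt f q ∧ Z = forwardOrbit f q}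
  let eR := (Finite.equivFin R).symm
  let eO := (Finite.equivFin O).symm
  choose q hq using fun j => (eO j).2
  refine ⟨_, _, fun i => eR i, q, fun i => (eR i).2, fun j => ⟨(hq j).1, (hq j).2.1⟩,
    Set.Subset.antisymm (fun x hx => ?_) (Set.union_subset (Set.iUnion_subset fun i =>
      basin_subset hfix (Set.singleton_subset_iff.mpr (eR i).2.1)) (Set.iUnion_subset fun j =>
      basin_subset hfix (forwardOrbit_subset_of_not_isFixedPt hfix (hq j).1 (hq j).2.1))),
    fun i i' hne => disjoint_basin_singleton (eR i).2.2 (eR i').2.2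
      fun h => hne (eR.injective (Subtype.ext h)),
    fun j j' hne => disjoint_basin_forwardOrbit (hq j).1 (hq j').1 fun h =>
      hne (eO.injective (Subtype.ext ((hq j).2.2.trans (h.trans (hq j').2.2.symm)))),
    fun i j => disjoint_basin_singleton_forwardOrbit (eR i).2.2 (hq j).1 (hq j).2.1⟩
  obtain ⟨p, hp, n, hn⟩ := exists_mem_basin_forwardOrbit f x
  by_cases hfixp : IsFixedPt f p
  · rw [hfixp.forwardOrbit_eq, Set.mem_singleton_iff] at hn
    have hpR : p ∈ R := ⟨hn ▸ hK.iterate n hx, hfixp⟩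
    refine Or.inl (Set.mem_iUnion.mpr ⟨eR.symm ⟨p, hpR⟩, n, ?_⟩)
    simp only [Equiv.apply_symm_apply, hn]
    rfl
  · have hpO : forwardOrbit f p ∈ O := ⟨p, hp, hfixp, rfl⟩
    refine Or.inr (Set.mem_iUnion.mpr ⟨eO.symm ⟨_, hpO⟩, n, ?_⟩)
    rw [← (hq _).2.2, Equiv.apply_symm_apply]
    exact hn

end Function

namespace SimpleGraph.Walk.IsCycle

open Function

variable {V : Type*} {G : SimpleGraph V} {a : V} {c : G.Walk a a}

theorem exists_adj_ne (hc : c.IsCycle) {v : V} (hv : v ∈ c.support) :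
    ∃ b₁ b₂, b₁ ≠ b₂ ∧ G.Adj v b₁ ∧ G.Adj v b₂ ∧ b₁ ∈ c.support ∧ b₂ ∈ c.support := by
  obtain ⟨b₁, b₂, hne, hnbr⟩ := Set.ncard_eq_two.mp (hc.ncard_neighborSet_toSubgraph_eq_two hv)
  have h₁ : c.toSubgraph.Adj v b₁ := by simp [← Subgraph.mem_neighborSet, hnbr]
  have h₂ : c.toSubgraph.Adj v b₂ := by simp [← Subgraph.mem_neighborSet, hnbr]
  exact ⟨b₁, b₂, hne, h₁.adj_sub, h₂.adj_sub, mem_support_of_adj_toSubgraph h₁.symm,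
    mem_support_of_adj_toSubgraph h₂.symm⟩

variable {p : V → V} (hG : ∀ x y, G.Adj x y → p x = y ∨ p y = x)
include hG

/-- Take a vertex `x` of the cycle farthest from `Z`, counted in steps of `p`. Of its two
neighbours on the cycle, one is not `p x`, so it is a preimage of `x`, hence farther from `Z`. -/
theorem support_subset_of_mapsTo {Z : Set V} (hZ : Set.MapsTo p Z Z)
    (hbasin : ∀ x y, G.Adj x y → x ∈ basin p Z) (hc : c.IsCycle) : ∀ x ∈ c.support, x ∈ Z := by
  classical
  let ρ : V → ℕ := fun x => sInf {n | p^[n] x ∈ Z}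
  have hρ_mem : ∀ x ∈ basin p Z, p^[ρ x] x ∈ Z := fun x hx => Nat.sInf_mem hx
  have hρ_apply : ∀ x ∈ basin p Z, x ∉ Z → ρ (p x) < ρ x := by
    intro x hx hxZ
    have hmem := hρ_mem x hx
    obtain ⟨k, hk⟩ : ∃ k, ρ x = k + 1 :=
      Nat.exists_eq_succ_of_ne_zero fun h0 => hxZ (by rwa [h0] at hmem)
    rw [hk, iterate_succ_apply] at hmem
    rw [hk]
    exact Nat.lt_succ_of_le (Nat.sInf_le hmem)
  have hsupp_basin : ∀ x ∈ c.support, x ∈ basin p Z := fun x hx =>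
    let ⟨b, _, _, hb, _⟩ := hc.exists_adj_ne hx
    hbasin x b hb
  by_contra! hout
  obtain ⟨x₀, hx₀, hx₀Z⟩ := hout
  obtain ⟨x, hx, hmax⟩ := c.support.toFinset.exists_max_image ρ ⟨x₀, List.mem_toFinset.mpr hx₀⟩
  rw [List.mem_toFinset] at hx
  have hxZ : x ∉ Z := fun hxZ => by
    have : ρ x = 0 := Nat.sInf_eq_zero.mpr (Or.inl (by simpa using hxZ))
    have := hρ_apply x₀ (hsupp_basin x₀ hx₀) hx₀Z
    have := hmax _ (List.mem_toFinset.mpr hx₀)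
    omega
  have hnbr : ∀ b, G.Adj x b → b ∈ c.support → b = p x := by
    intro b hxb hb
    refine (hG x b hxb).elim Eq.symm fun hbx => ?_
    have hbZ : b ∉ Z := fun hbZ => hxZ (hbx ▸ hZ hbZ)
    have := hρ_apply b (hsupp_basin b hb) hbZ
    have := hmax b (List.mem_toFinset.mpr hb)
    rw [hbx] at *
    omega
  obtain ⟨b₁, b₂, hne, h₁, h₂, hb₁, hb₂⟩ := hc.exists_adj_ne hx
  exact hne ((hnbr b₁ h₁ hb₁).trans (hnbr b₂ h₂ hb₂).symm)

theorem apply_mem_support {Z : Set V} (hZ : Set.InjOn p Z) (hc : c.IsCycle)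
    (hcZ : ∀ x ∈ c.support, x ∈ Z) {x : V} (hx : x ∈ c.support) : p x ∈ c.support := by
  obtain ⟨b₁, b₂, hne, h₁, h₂, hb₁, hb₂⟩ := hc.exists_adj_ne hx
  rcases hG x b₁ h₁ with rfl | hb₁x
  · exact hb₁
  rcases hG x b₂ h₂ with rfl | hb₂x
  · exact hb₂
  exact absurd (hZ (hcZ _ hb₁) (hcZ _ hb₂) (hb₁x.trans hb₂x.symm)) hne

end SimpleGraph.Walk.IsCycle

theorem exists_maximal_stable_of_subset {W : Type} [Finite W] (G : SimpleGraph W) {A M : Set W}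
    (hAM : A ⊆ M) (hA : Stable G A) :
    ∃ S, A ⊆ S ∧ S ⊆ M ∧ Stable G S ∧ ∀ x ∈ M, x ∉ S → ∃ s ∈ S, G.Adj x s := by
  obtain ⟨S, hAS, ⟨-, hSM, hS⟩, hmax⟩ :=
    Finite.exists_le_maximal (p := fun S => A ⊆ S ∧ S ⊆ M ∧ Stable G S) ⟨subset_rfl, hAM, hA⟩
  refine ⟨S, hAS, hSM, hS, fun x hxM hxS => ?_⟩
  by_contra! hno
  have hstable : Stable G (insert x S) := by
    rintro a (rfl | ha) b (rfl | hb)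
    exacts [G.irrefl, hno b hb, fun h => hno a ha h.symm, hS a ha b hb]
  exact hxS (hmax ⟨hAS.trans (Set.subset_insert x S), Set.insert_subset hxM hSM, hstable⟩
    (Set.subset_insert x S) (Set.mem_insert x S))

namespace WOGraph

open Function

variable {V : Type} {D : WOGraph V} {C : Set V}

theorem IsVC.not_adj (hC : D.IsVC C) {x y : V} (hx : x ∉ C) (hy : y ∉ C) :
    ¬D.graph.Adj x y := by
  rw [graph, SimpleGraph.fromRel_adj]
  rintro ⟨-, h | h⟩
  · exact (hC _ _ h).elim hx hy
  · exact (hC _ _ h).elim hy hx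

theorem exists_nbr_notMem_of_notMem_L3 {x : V} (hx : x ∈ C) (h : x ∉ D.L3 C) :
    ∃ u, u ∉ C ∧ u ∈ D.nbr x := by
  by_contra! hno
  refine h ⟨hx, fun ⟨_, u, hu, huC⟩ => ?_, fun ⟨_, _, u, hu, huC⟩ => ?_⟩
  · exact absurd (hno u huC) (not_not.mpr (Or.inl hu))
  · exact absurd (hno u huC) (not_not.mpr (Or.inr hu))

namespace OSub

variable {H : D.OSub} {x y z : V}

theorem exists_E_of_deg_ne_zero (h : H.deg x ≠ 0) :
    ∃ y, H.E x y ∨ H.E y x :=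
  Set.nonempty_of_ncard_ne_zero h

theorem not_disjoint_of_E {S : Set V} (hxy : H.E x y) (h : x ∈ S ∨ y ∈ S) :
    ¬Disjoint H.verts S := fun hd =>
  h.elim (Set.disjoint_left.mp hd (H.memL _ _ hxy)) (Set.disjoint_left.mp hd (H.memR _ _ hxy))

theorem deg_eq_zero_of_verts_eq_singleton (h : H.verts = {y}) (x : V) : H.deg x = 0 := by
  have : H.nbr x = ∅ := Set.eq_empty_of_forall_notMem fun z hz => by
    have hloop : ∀ a b, H.E a b → False := fun a b hab => by
      have ha := H.memL _ _ hab
      have hb := H.memR _ _ hab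
      rw [h, Set.mem_singleton_iff] at ha hb
      subst ha hb
      exact D.irrefl _ (H.sub _ _ hab)
    exact hz.elim (hloop _ _) (hloop _ _)
  rw [deg, this, Set.ncard_empty]

variable [Finite V]

theorem deg_ne_zero_of_E (h : H.E x y) : H.deg x ≠ 0 :=
  (Set.ncard_pos (Set.toFinite _)).mpr ⟨y, Or.inl h⟩ |>.ne'

theorem two_le_deg (hzy : H.E z y) (hyx : H.E y x) : 2 ≤ H.deg y := by
  refine (Set.one_lt_ncard (Set.toFinite _)).mpr ⟨x, Or.inl hyx, z, Or.inr hzy, ?_⟩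
  rintro rfl
  exact D.asymm _ _ (H.sub _ _ hzy) (H.sub _ _ hyx)

end OSub

theorem IsROT.one_lt_w {T : D.OSub} {v x : V} (hT : D.IsROT T v) (hx : x ∈ T.verts)
    (h : 2 ≤ T.deg x ∨ (x = v ∧ T.deg x ≠ 0)) : 1 < D.w x := by
  refine lt_of_le_of_ne (D.w_pos x) fun hw => ?_
  rcases hT.2.2.2 x hx hw.symm with ⟨hdeg, hxv⟩ | ⟨hsingle, -⟩
  · rcases h with h | ⟨hxv', -⟩
    exacts [by omega, hxv hxv']
  · have := OSub.deg_eq_zero_of_verts_eq_singleton hsingle x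
    rcases h with h | ⟨-, h⟩ <;> omega

theorem IsUnicycle.one_lt_w {B : D.OSub} {Cs : Set V} {x : V} (hB : D.IsUnicycle B Cs)
    (hx : x ∈ B.verts) (h : 2 ≤ B.deg x) : 1 < D.w x :=
  lt_of_le_of_ne (D.w_pos x) fun hw => by
    have := hB.2.2.2 x hx hw.symm
    omega

theorem IsUnicycle.exists_E {B : D.OSub} {Cs : Set V} {x : V} (hB : D.IsUnicycle B Cs)
    (hx : x ∈ B.verts) : ∃ y, B.E y x := by
  obtain ⟨⟨n, f, -, -, hrange, hcyc⟩, -, hreach, -⟩ := hB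
  by_cases hxC : x ∈ Cs
  · obtain ⟨k, rfl⟩ := hrange ▸ hxC
    exact ⟨f (k - 1), by simpa using hcyc (k - 1)⟩
  · obtain ⟨c, hc, hcx⟩ := hreach x hx hxC
    obtain rfl | ⟨y, -, hyx⟩ := hcx.cases_tail
    · exact absurd hc hxC
    · exact ⟨y, hyx⟩

/-- The vertices fixed by `par` are those without a parent. -/
structure ParentMap (D : WOGraph V) where
  par : V → V
  edge_par : ∀ x, par x ≠ x → D.E (par x) x
  one_lt_w_par : ∀ x, par x ≠ x → 1 < D.w (par x)

namespace ParentMap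

variable (P : D.ParentMap)

def sub (S : Set V) : D.OSub where
  verts := S
  E a b := a ∈ S ∧ b ∈ S ∧ P.par b = a ∧ a ≠ b
  sub _ b h := h.2.2.1 ▸ P.edge_par b (h.2.2.1 ▸ h.2.2.2)
  memL _ _ h := h.1
  memR _ _ h := h.2.1

variable {P} {S : Set V} {x y : V}

theorem eq_par_of_sub_graph_adj (h : (P.sub S).graph.Adj x y) : P.par x = y ∨ P.par y = x := by
  rw [OSub.graph, SimpleGraph.fromRel_adj] at h
  exact h.2.symm.imp (fun h => h.2.2.1) fun h => h.2.2.1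

theorem mem_of_sub_graph_adj (h : (P.sub S).graph.Adj x y) : x ∈ S := by
  rw [OSub.graph, SimpleGraph.fromRel_adj] at h
  exact h.2.elim (fun h => h.1) fun h => h.2.1

theorem reflTransGen_sub_iterate (hS : Set.MapsTo P.par S S) (hx : x ∈ S) (n : ℕ) :
    Relation.ReflTransGen (P.sub S).E (P.par^[n] x) x := by
  induction n generalizing x with
  | zero => exact .refl
  | succ n ih =>
    rw [iterate_succ_apply]
    by_cases hfix : P.par x = x
    · rw [hfix]
      exact ih hx
    · exact (ih (hS hx)).tail ⟨hS hx, hx, rfl, hfix⟩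

theorem not_sub_E_of_w_eq_one (hx : D.w x = 1) : ¬(P.sub S).E x y := by
  rintro ⟨-, -, rfl, hne⟩
  exact absurd hx (P.one_lt_w_par y hne).ne'

theorem deg_sub_eq_one (hx : x ∈ S) (hpx : P.par x ∈ S) (hne : P.par x ≠ x) (hw : D.w x = 1) :
    (P.sub S).deg x = 1 := by
  have : (P.sub S).nbr x = {P.par x} := by
    ext u
    refine ⟨fun h => h.elim (absurd · (not_sub_E_of_w_eq_one hw)) fun h => h.2.2.1.symm, ?_⟩
    rintro rfl
    exact Or.inr ⟨hpx, hx, rfl, hne⟩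
  rw [OSub.deg, this, Set.ncard_singleton]

theorem basin_singleton_eq_of_w_eq_one {v : V} (hv : D.w v = 1) : basin P.par {v} = {v} := by
  refine Set.Subset.antisymm ?_ fun _ h => self_mem_basin h
  rintro y ⟨n, hn⟩
  induction n generalizing y with
  | zero => exact hn
  | succ n ih =>
    rw [iterate_succ_apply] at hn
    have hpy : P.par y = v := ih hn
    by_contra hne
    exact absurd hv (hpy ▸ P.one_lt_w_par y (hpy ▸ Ne.symm hne)).ne'

theorem isROT_sub_basin {v : V} (hv : P.par v = v) : D.IsROT (P.sub (basin P.par {v})) v := by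
  have hv' : Set.MapsTo P.par {v} {v} := fun x hx => by
    rw [Set.mem_singleton_iff.mp hx, hv]; rfl
  have hmaps := mapsTo_basin hv'
  refine ⟨self_mem_basin rfl, fun a c hc => ?_, fun x hx => ?_, fun x hx hw => ?_⟩
  · have hsupp := hc.support_subset_of_mapsTo (fun _ _ h => eq_par_of_sub_graph_adj h) hv'
      (fun _ _ h => mem_of_sub_graph_adj h)
    obtain ⟨b, -, -, hab, -, hb, -⟩ := hc.exists_adj_ne c.start_mem_support
    exact hab.ne ((hsupp a c.start_mem_support).trans (hsupp b hb).symm)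
  · obtain ⟨n, hn⟩ := id hx
    exact Set.mem_singleton_iff.mp hn ▸ P.reflTransGen_sub_iterate hmaps hx n
  · by_cases hxv : x = v
    · exact Or.inr ⟨basin_singleton_eq_of_w_eq_one (hxv ▸ hw), hxv⟩
    · have hfix : P.par x ≠ x := fun hfix =>
        hxv (Set.mem_singleton_iff.mp (IsFixedPt.mem_of_mem_basin (f := P.par) hfix hx))
      exact Or.inl ⟨deg_sub_eq_one hx (hmaps hx) hfix hw, hxv⟩

section Cycle

variable {q : V} (hq : q ∈ periodicPts P.par) (hq' : P.par q ≠ q)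
include hq hq'

theorem one_lt_w_of_mem_forwardOrbit (hy : y ∈ forwardOrbit P.par q) : 1 < D.w y := by
  obtain ⟨z, -, hzy⟩ :=
    (bijOn_periodicPts (f := P.par)).surjOn (forwardOrbit_subset_periodicPts hq hy)
  refine hzy ▸ P.one_lt_w_par z fun hz => not_isFixedPt_of_mem_forwardOrbit hq hq' hy ?_
  obtain rfl : z = y := hz.symm.trans hzy
  exact hz

theorem three_le_minimalPeriod : 3 ≤ minimalPeriod P.par q := by
  have hpos := minimalPeriod_pos_of_mem_periodicPts hq
  have h1 : minimalPeriod P.par q ≠ 1 := fun h => hq' (minimalPeriod_eq_one_iff_isFixedPt.mp h)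
  have h2 : minimalPeriod P.par q ≠ 2 := fun h => by
    have hpp : P.par (P.par q) = q := by
      simpa [h] using iterate_minimalPeriod (f := P.par) (x := q)
    have hne : P.par (P.par q) ≠ P.par q := by rw [hpp]; exact Ne.symm hq'
    have hback := P.edge_par _ hne
    rw [hpp] at hback
    exact D.asymm _ _ (P.edge_par q hq') hback
  omega

theorem isUnicycle_sub_basin :
    D.IsUnicycle (P.sub (basin P.par (forwardOrbit P.par q))) (forwardOrbit P.par q) := by
  have hO := mapsTo_forwardOrbit (f := P.par) q
  have hmaps := mapsTo_basin hO
  refine ⟨⟨_, fun i : ZMod (minimalPeriod P.par q) => P.par^[(-i).val] q,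
    three_le_minimalPeriod hq hq', injective_iterate_neg_val hq, range_iterate_neg_val hq,
    fun i => ?_⟩,
    fun a c hc => ?_, fun y hy _ => ?_, fun x hx hw => ?_⟩
  · have hmem : ∀ j : ZMod (minimalPeriod P.par q),
        P.par^[(-j).val] q ∈ basin P.par (forwardOrbit P.par q) := fun j => self_mem_basin ⟨_, rfl⟩
    refine ⟨hmem i, hmem (i + 1), apply_iterate_neg_val_add_one hq i, ?_⟩
    dsimp only
    rw [← apply_iterate_neg_val_add_one hq i]
    exact not_isFixedPt_of_mem_forwardOrbit hq hq' ⟨_, rfl⟩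
  · have hadj : ∀ x y, (P.sub (basin P.par (forwardOrbit P.par q))).graph.Adj x y →
        P.par x = y ∨ P.par y = x := fun _ _ => eq_par_of_sub_graph_adj
    have hsub := hc.support_subset_of_mapsTo hadj hO fun _ _ h => mem_of_sub_graph_adj h
    have hclosed := fun x (hx : x ∈ c.support) => hc.apply_mem_support hadj
      ((bijOn_periodicPts (f := P.par)).injOn.mono (forwardOrbit_subset_periodicPts hq)) hsub hx
    refine Set.Subset.antisymm hsub ?_
    refine (forwardOrbit_eq_of_mem hq (hsub a c.start_mem_support)).symm.subset.trans ?_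
    rintro _ ⟨n, rfl⟩
    induction n with
    | zero => exact c.start_mem_support
    | succ n ih =>
      show P.par^[n + 1] a ∈ c.support
      rw [iterate_succ_apply']
      exact hclosed _ ih
  · obtain ⟨n, hn⟩ := id hy
    exact ⟨_, hn, P.reflTransGen_sub_iterate hmaps hy n⟩
  · have hxO : x ∉ forwardOrbit P.par q := fun h =>
      absurd hw (one_lt_w_of_mem_forwardOrbit hq hq' h).ne'
    have hfix : P.par x ≠ x := fun hfix => hxO (IsFixedPt.mem_of_mem_basin (f := P.par) hfix hx)
    exact deg_sub_eq_one hx (hmaps hx) hfix hw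

end Cycle

variable (P) {S' : Set V}

theorem sub_E_mono (h : S ⊆ S') (hxy : (P.sub S).E x y) : (P.sub S').E x y :=
  ⟨h hxy.1, h hxy.2.1, hxy.2.2⟩

theorem sub_E_of_mem (hS : Set.MapsTo P.par S S) (hy : y ∈ S) (hxy : (P.sub S').E x y) :
    (P.sub S).E x y :=
  ⟨hxy.2.2.1 ▸ hS hy, hy, hxy.2.2⟩

theorem sub_E_iff_of_eq_union {ι κ : Type*} {K : Set V} {T : ι → Set V} {B : κ → Set V}
    (hK : K = (⋃ i, T i) ∪ ⋃ j, B j) (hT : ∀ i, Set.MapsTo P.par (T i) (T i))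
    (hB : ∀ j, Set.MapsTo P.par (B j) (B j)) :
    (P.sub K).E x y ↔ (∃ i, (P.sub (T i)).E x y) ∨ ∃ j, (P.sub (B j)).E x y := by
  subst hK
  refine ⟨fun hxy => ?_, ?_⟩
  · have hy := hxy.2.1
    rw [Set.mem_union, Set.mem_iUnion, Set.mem_iUnion] at hy
    exact hy.imp (fun ⟨i, hy⟩ => ⟨i, P.sub_E_of_mem (hT i) hy hxy⟩)
      fun ⟨j, hy⟩ => ⟨j, P.sub_E_of_mem (hB j) hy hxy⟩
  · rintro (⟨i, h⟩ | ⟨j, h⟩)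
    exacts [P.sub_E_mono (Set.subset_union_of_subset_left (Set.subset_iUnion _ i) _) h,
      P.sub_E_mono (Set.subset_union_of_subset_right (Set.subset_iUnion _ j) _) h]

theorem notMem_L1_of_deg_sub_ne_zero
    (hL1 : ∀ x, P.par x ≠ x → x ∉ D.L1 C ∧ P.par x ∉ D.L1 C) (hx : (P.sub S).deg x ≠ 0) :
    x ∉ D.L1 C := by
  obtain ⟨y, ⟨-, -, rfl, hne⟩ | ⟨-, -, rfl, hne⟩⟩ := OSub.exists_E_of_deg_ne_zero hx
  exacts [(hL1 y hne).2, (hL1 x hne).1]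

/-- The roots are the fixed points of `par` in `K`; the vertex `wᵢ` of a root is the one given by
`hroot`, placed in `W₁` if it lies outside `C` and in `W₂` otherwise. -/
theorem nonempty_ssf_sub [Finite V] {K : Set V} (hC : D.IsVC C) (hKC : K ⊆ C)
    (hfix : ∀ x ∉ K, P.par x = x) (hK : Set.MapsTo P.par K K)
    (hL1 : ∀ x, P.par x ≠ x → x ∉ D.L1 C ∧ P.par x ∉ D.L1 C)
    (hroot : ∀ v ∈ K, P.par v = v → ∃ w, (w ∉ C ∧ w ∈ D.nbr v) ∨
      (w ∉ K ∧ D.E w v ∧ w ∈ C ∧ w ∉ D.L1 C ∧ 1 < D.w w)) :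
    Nonempty (D.SSF (P.sub K)) := by
  choose! w hw using hroot
  obtain ⟨r, s, v, q, hv, hq, hverts, hTT, hBB, hTB⟩ := exists_basin_decomposition hK hfix
  have hwv := fun i => hw (v i) (hv i).1 (hv i).2
  have hW2 : ∀ i, w (v i) ∈ C → w (v i) ∉ K ∧ D.E (w (v i)) (v i) ∧ w (v i) ∉ D.L1 C ∧
      1 < D.w (w (v i)) := fun i hwC =>
    (hwv i).elim (fun h => absurd hwC h.1) fun h => ⟨h.1, h.2.1, h.2.2.2⟩
  refine ⟨{
    r, s, parent := v, wv := fun i => w (v i)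
    T := fun i => P.sub (basin P.par {v i})
    B := fun j => P.sub (basin P.par (forwardOrbit P.par (q j)))
    Cs := fun j => forwardOrbit P.par (q j)
    hT := fun i => P.isROT_sub_basin (hv i).2
    hB := fun j => P.isUnicycle_sub_basin (hq j).1 (hq j).2
    hverts := hverts
    hE := fun a b => P.sub_E_iff_of_eq_union hverts
      (fun i => mapsTo_basin fun _ h => h ▸ (hv i).2) fun j => mapsTo_basin (mapsTo_forwardOrbit _)
    hTT := fun i i' hne => hTT hne
    hBB := fun j j' hne => hBB hne
    hTB := hTB
    hwv_not := fun i hwK => (hwv i).elim (fun h => h.1 (hKC hwK)) fun h => h.1 hwK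
    hwv_nbr := fun i => (hwv i).elim (fun h => h.2) fun h => Or.inr h.2.1
    W1 := Set.range (fun i => w (v i)) \ C
    W2 := Set.range (fun i => w (v i)) ∩ C
    hW_union := Set.sdiff_union_inter _ _
    hW_disj := Set.disjoint_sdiff_inter
    hW1_stable := fun x hx y hy => hC.not_adj hx.2 hy.2
    hW2_plus := by
      rintro _ ⟨⟨i, rfl⟩, hwC⟩
      exact (hW2 i hwC).2.2.2
    hW2_edge := fun i hwC => (hW2 i hwC.2).2.1
    hW1_out := ?_ }⟩
  rw [Set.eq_empty_iff_forall_notMem]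
  rintro y ⟨⟨a, ha, hay⟩, -, hyC⟩
  have haC : a ∈ C ∧ a ∉ D.L1 C := by
    rcases ha with ⟨⟨i, rfl⟩, hwC⟩ | ⟨haK, hdeg⟩ | ⟨⟨i, rfl⟩, hdeg⟩
    · exact ⟨hwC, (hW2 i hwC).2.2.1⟩
    · exact ⟨hKC haK, P.notMem_L1_of_deg_sub_ne_zero (S := K) hL1 (by omega)⟩
    · exact ⟨hKC (hv i).1, P.notMem_L1_of_deg_sub_ne_zero (S := K) hL1 (by omega)⟩
  exact haC.2 ⟨haC.1, y, hay, hyC⟩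

end ParentMap

/-- Each vertex of `K ∩ L₃(C)` whose strong witness lies in `K` takes it as its parent. -/
theorem IsStrongVC.exists_parentMap (hC : D.IsStrongVC C) {K : Set V} (hKC : K ⊆ C) :
    ∃ P : D.ParentMap, (∀ x ∉ K, P.par x = x) ∧ Set.MapsTo P.par K K ∧
      (∀ x, P.par x ≠ x → x ∉ D.L1 C ∧ P.par x ∉ D.L1 C) ∧
      ∀ v ∈ K, P.par v = v → ∃ w, (w ∉ C ∧ w ∈ D.nbr v) ∨
        (w ∉ K ∧ D.E w v ∧ w ∈ C ∧ w ∉ D.L1 C ∧ 1 < D.w w) := by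
  classical
  choose! g hgE hgC hgL1 hgw using hC.2
  let internal (x : V) : Prop := x ∈ K ∧ x ∈ D.L3 C ∧ g x ∈ K
  have hpar_ne : ∀ x, (if internal x then g x else x) ≠ x → internal x := fun x h =>
    by_contra fun hx => h (if_neg hx)
  refine ⟨⟨fun x => if internal x then g x else x, fun x h => ?_, fun x h => ?_⟩,
    fun x hx => if_neg fun h => hx h.1, fun x hx => ?_, fun x h => ?_, fun v hv hfix => ?_⟩
  · have hx := hpar_ne x h
    simpa only [if_pos hx] using hgE x hx.2.1
  · have hx := hpar_ne x h
    simpa only [if_pos hx] using hgw x hx.2.1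
  · dsimp only
    split_ifs with h
    exacts [h.2.2, hx]
  · have hx := hpar_ne x h
    simp only [if_pos hx]
    exact ⟨hx.2.1.2.1, hgL1 x hx.2.1⟩
  · by_cases hv3 : v ∈ D.L3 C
    · refine ⟨g v, Or.inr ⟨fun hgK => ?_, hgE v hv3, hgC v hv3, hgL1 v hv3, hgw v hv3⟩⟩
      have hgv : g v = v := (if_pos (⟨hv, hv3, hgK⟩ : internal v)).symm.trans hfix
      have hloop := hgE v hv3
      rw [hgv] at hloop
      exact D.irrefl v hloop
    · obtain ⟨u, hu⟩ := exists_nbr_notMem_of_notMem_L3 (hKC hv) hv3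
      exact ⟨u, Or.inl hu⟩

theorem IsStrongVC.hasGenSSF [Finite V] (hC : D.IsStrongVC C) {K : D.OSub} (hKC : K.verts ⊆ C) :
    D.HasGenSSF K :=
  let ⟨P, hfix, hK, hL1, hroot⟩ := hC.exists_parentMap hKC
  ⟨P.sub K.verts, P.nonempty_ssf_sub hC.1 hKC hfix hK hL1 hroot, rfl⟩

namespace SSF

variable {H : D.OSub} (F : D.SSF H) {x a b : V}

theorem E_T_of_mem {i : Fin F.r} (hab : H.E a b) (h : a ∈ (F.T i).verts ∨ b ∈ (F.T i).verts) :
    (F.T i).E a b := by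
  rcases (F.hE a b).mp hab with ⟨i', h'⟩ | ⟨j, h'⟩
  · by_cases hii : i' = i
    · exact hii ▸ h'
    · exact absurd (F.hTT i' i hii) (OSub.not_disjoint_of_E h' h)
  · exact absurd (F.hTB i j).symm (OSub.not_disjoint_of_E h' h)

theorem E_B_of_mem {j : Fin F.s} (hab : H.E a b) (h : a ∈ (F.B j).verts ∨ b ∈ (F.B j).verts) :
    (F.B j).E a b := by
  rcases (F.hE a b).mp hab with ⟨i, h'⟩ | ⟨j', h'⟩
  · exact absurd (F.hTB i j) (OSub.not_disjoint_of_E h' h)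
  · by_cases hjj : j' = j
    · exact hjj ▸ h'
    · exact absurd (F.hBB j' j hjj) (OSub.not_disjoint_of_E h' h)

theorem deg_T {i : Fin F.r} (hx : x ∈ (F.T i).verts) : H.deg x = (F.T i).deg x := by
  have : H.nbr x = (F.T i).nbr x := Set.ext fun y =>
    ⟨Or.imp (F.E_T_of_mem · (Or.inl hx)) (F.E_T_of_mem · (Or.inr hx)),
      Or.imp (fun h => (F.hE _ _).mpr (Or.inl ⟨i, h⟩)) fun h => (F.hE _ _).mpr (Or.inl ⟨i, h⟩)⟩
  rw [OSub.deg, this, OSub.deg]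

theorem deg_B {j : Fin F.s} (hx : x ∈ (F.B j).verts) : H.deg x = (F.B j).deg x := by
  have : H.nbr x = (F.B j).nbr x := Set.ext fun y =>
    ⟨Or.imp (F.E_B_of_mem · (Or.inl hx)) (F.E_B_of_mem · (Or.inr hx)),
      Or.imp (fun h => (F.hE _ _).mpr (Or.inr ⟨j, h⟩)) fun h => (F.hE _ _).mpr (Or.inr ⟨j, h⟩)⟩
  rw [OSub.deg, this, OSub.deg]

theorem one_lt_w_of_mem_tilde (hx : x ∈ F.tilde) : 1 < D.w x := by
  rcases hx with ⟨hxH, hdeg⟩ | ⟨⟨i, rfl⟩, hdeg⟩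
  · rw [F.hverts] at hxH
    rcases hxH with hxT | hxB
    · obtain ⟨i, hi⟩ := Set.mem_iUnion.mp hxT
      exact (F.hT i).one_lt_w hi (Or.inl (F.deg_T hi ▸ hdeg))
    · obtain ⟨j, hj⟩ := Set.mem_iUnion.mp hxB
      exact (F.hB j).one_lt_w hj (F.deg_B hj ▸ hdeg)
  · have hv := (F.hT i).1
    exact (F.hT i).one_lt_w hv (Or.inr ⟨rfl, by rw [← F.deg_T hv, hdeg]; exact one_ne_zero⟩)

theorem mem_tilde_of_E_of_E [Finite V] {z : V} (hzy : H.E z a) (hyx : H.E a b) : a ∈ F.tilde :=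
  Or.inl ⟨H.memL _ _ hyx, OSub.two_le_deg hzy hyx⟩

theorem exists_tilde_E [Finite V] (hx : x ∈ H.verts) (hxv : ∀ i, F.parent i ≠ x) :
    ∃ y ∈ F.tilde, H.E y x := by
  have hsubT : ∀ i a b, (F.T i).E a b → H.E a b := fun i a b h => (F.hE a b).mpr (Or.inl ⟨i, h⟩)
  have hsubB : ∀ j a b, (F.B j).E a b → H.E a b := fun j a b h => (F.hE a b).mpr (Or.inr ⟨j, h⟩)
  rw [F.hverts] at hx
  rcases hx with hxT | hxB
  · obtain ⟨i, hi⟩ := Set.mem_iUnion.mp hxT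
    obtain heq | ⟨y, hvy, hyx⟩ := ((F.hT i).2.2.1 x hi).cases_tail
    · exact absurd heq.symm (hxv i)
    obtain rfl | ⟨z, -, hzy⟩ := hvy.cases_tail
    · refine ⟨F.parent i, ?_, hsubT i _ _ hyx⟩
      have hdeg := OSub.deg_ne_zero_of_E (hsubT i _ _ hyx)
      by_cases h1 : H.deg (F.parent i) = 1
      exacts [Or.inr ⟨⟨i, rfl⟩, h1⟩, Or.inl ⟨H.memL _ _ (hsubT i _ _ hyx), by omega⟩]
    · exact ⟨y, F.mem_tilde_of_E_of_E (hsubT i _ _ hzy) (hsubT i _ _ hyx), hsubT i _ _ hyx⟩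
  · obtain ⟨j, hj⟩ := Set.mem_iUnion.mp hxB
    obtain ⟨y, hyx⟩ := (F.hB j).exists_E hj
    obtain ⟨z, hzy⟩ := (F.hB j).exists_E ((F.B j).memL _ _ hyx)
    exact ⟨y, F.mem_tilde_of_E_of_E (hsubB j _ _ hzy) (hsubB j _ _ hyx), hsubB j _ _ hyx⟩

theorem exists_in_nbr_W2_tilde_or_nbr_W1 [Finite V] (hx : x ∈ H.verts) :
    (∃ y ∈ F.W2 ∪ F.tilde, D.E y x) ∨ ∃ u ∈ F.W1, u ∈ D.nbr x := by
  by_cases hroot : ∃ i, F.parent i = x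
  · obtain ⟨i, rfl⟩ := hroot
    have hw : F.wv i ∈ F.W1 ∪ F.W2 := F.hW_union ▸ Set.mem_range_self i
    rcases hw with hw | hw
    exacts [Or.inr ⟨_, hw, F.hwv_nbr i⟩, Or.inl ⟨_, Or.inl hw, F.hW2_edge i hw⟩]
  · simp only [not_exists] at hroot
    obtain ⟨y, hy, hyx⟩ := F.exists_tilde_E hx hroot
    exact Or.inl ⟨y, Or.inr hy, H.sub _ _ hyx⟩

end SSF

/-- `C` is the complement of a maximal stable set containing `W₁` and avoiding both `H` and
`N⁺(W₂ ∪ H̃)`. -/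
theorem SSF.exists_isStrongVC [Finite V] {H : D.OSub} (F : D.SSF H) :
    ∃ C, D.IsStrongVC C ∧ H.verts ⊆ C := by
  let A := H.verts ∪ D.outNS (F.W2 ∪ F.tilde)
  have hW1A : F.W1 ⊆ Aᶜ := by
    rintro u hu (huH | huN)
    · obtain ⟨i, rfl⟩ : u ∈ Set.range F.wv := F.hW_union ▸ Or.inl hu
      exact F.hwv_not i huH
    · exact (Set.eq_empty_iff_forall_notMem.mp F.hW1_out) u ⟨huN, hu⟩
  obtain ⟨S, hW1S, hSA, hS, hmax⟩ :=
    exists_maximal_stable_of_subset D.graph hW1A F.hW1_stable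
  have hVC : D.IsVC Sᶜ := fun u v huv => by
    by_contra! h
    exact hS u (not_not.mp h.1) v (not_not.mp h.2)
      ((SimpleGraph.fromRel_adj _ _ _).mpr ⟨fun he => D.irrefl u (he ▸ huv), Or.inl huv⟩)
  have hgood : ∀ y ∈ F.W2 ∪ F.tilde, y ∉ D.L1 Sᶜ ∧ 1 < D.w y := fun y hy =>
    ⟨fun ⟨_, z, hyz, hzS⟩ => hSA (not_not.mp hzS) (Or.inr ⟨y, hy, hyz⟩),
      hy.elim (F.hW2_plus ·) F.one_lt_w_of_mem_tilde⟩
  refine ⟨Sᶜ, ⟨hVC, fun x hx => ?_⟩, fun x hxH hxS => hSA hxS (Or.inl hxH)⟩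
  have hnbr : ∀ u ∈ D.nbr x, u ∈ Sᶜ := fun u hu => by_contra fun huS => by
    rcases hu with hxu | hux
    exacts [hx.2.1 ⟨hx.1, u, hxu, huS⟩, hx.2.2 ⟨hx.1, hx.2.1, u, hux, huS⟩]
  by_cases hxA : x ∈ A
  · have hcases : (∃ y ∈ F.W2 ∪ F.tilde, D.E y x) ∨ ∃ u ∈ F.W1, u ∈ D.nbr x :=
      hxA.elim F.exists_in_nbr_W2_tilde_or_nbr_W1 fun ⟨y, hy, hyx⟩ => Or.inl ⟨y, hy, hyx⟩
    rcases hcases with ⟨y, hy, hyx⟩ | ⟨u, hu, hux⟩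
    · have hyC := hnbr y (Or.inr hyx)
      exact ⟨y, hyx, hyC, hgood y hy⟩
    · exact absurd (hW1S hu) (hnbr u hux)
  · obtain ⟨s, hs, hxs⟩ := hmax x hxA hx.1
    rw [graph, SimpleGraph.fromRel_adj] at hxs
    exact absurd hs (hnbr s hxs.2)

end WOGraph

theorem stmt3_general {V : Type} [Fintype V] (D : WOGraph V) (K : D.OSub) :
    (∃ C : Set V, D.IsStrongVC C ∧ K.verts ⊆ C) ↔ WOGraph.HasGenSSF D K := by
  constructor
  · rintro ⟨C, hC, hKC⟩
    exact hC.hasGenSSF hKC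
  · rintro ⟨H, ⟨F⟩, hHK⟩
    exact hHK ▸ F.exists_isStrongVC

/-- Theorem `theorem-oct29`. -/
theorem stmt3 {V : Type} [Fintype V] (D : WOGraph V) (K : D.OSub)
    (hK : WOGraph.IsInducedSub K) :
    (∃ C : Set V, D.IsStrongVC C ∧ K.verts ⊆ C) ↔ WOGraph.HasGenSSF D K :=
  stmt3_general D K
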